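/- arXiv:math/0407406 — 5 statements merged into one kernel-verified Lean document; each statement's English description precedes it below -/
import Mathlib

section
/- For every real u, the integral over θ in [0, 2π] of [1 + (u cos θ)·arctan(u cos θ)] / (4(1 + u²)) dθ equals π/(2√(1 + u²)). -/
open Real MeasureTheory intervalIntegral Set

/-- Key trigonometric integral. -/
lemma key1 (a : ℝ) :
    ∫ θ in (0:ℝ)..(2 * π), 1 / (1 + a ^ 2 * Real.cos θ ^ 2)
      = 2 * π / Real.sqrt (1 + a ^ 2) := by
  set b := Real.sqrt (1 + a ^ 2) with hbdef
  have hbsq : b ^ 2 = 1 + a ^ 2 := Real.sq_sqrt (by positivity)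
  have hb1 : 1 ≤ b := by nlinarith [Real.sqrt_nonneg (1 + a ^ 2)]
  have hb0 : 0 < b := lt_of_lt_of_le one_pos hb1
  set F : ℝ → ℝ := fun θ =>
    (θ - Real.arctan ((b - 1) * (Real.sin θ * Real.cos θ)
      / (1 + (b - 1) * Real.cos θ ^ 2))) / b with hF
  have hderiv : ∀ θ : ℝ, HasDerivAt F (1 / (1 + a ^ 2 * Real.cos θ ^ 2)) θ := by
    intro θ
    have hsc : Real.sin θ ^ 2 + Real.cos θ ^ 2 = 1 := Real.sin_sq_add_cos_sq θ
    have hD : (0:ℝ) < 1 + (b - 1) * Real.cos θ ^ 2 := by nlinarith [sq_nonneg (Real.cos θ)]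
    have hN : HasDerivAt (fun θ => (b - 1) * (Real.sin θ * Real.cos θ))
        ((b - 1) * (Real.cos θ * Real.cos θ - Real.sin θ * Real.sin θ)) θ := by
      have := ((Real.hasDerivAt_sin θ).mul (Real.hasDerivAt_cos θ)).const_mul (b - 1)
      refine this.congr_deriv ?_
      ring
    have hDd : HasDerivAt (fun θ => 1 + (b - 1) * Real.cos θ ^ 2)
        ((b - 1) * (2 * Real.cos θ * (-Real.sin θ))) θ := by
      have : HasDerivAt (fun θ => Real.cos θ ^ 2) (2 * Real.cos θ * (-Real.sin θ)) θ := by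
        simpa using (Real.hasDerivAt_cos θ).fun_pow 2
      simpa using (this.const_mul (b - 1)).const_add 1
    have hg := hN.div hDd (ne_of_gt hD)
    have harc := hg.arctan
    have hid := ((hasDerivAt_id θ).sub harc).div_const b
    refine hid.congr_deriv ?_
    symm
    have hden : (0:ℝ) < 1 + a ^ 2 * Real.cos θ ^ 2 := by positivity
    have h2 : (0:ℝ) < (1 + (b - 1) * Real.cos θ ^ 2) ^ 2
        + ((b - 1) * (Real.sin θ * Real.cos θ)) ^ 2 := by positivity
    have e1 : (1:ℝ) / (1 + ((b - 1) * (Real.sin θ * Real.cos θ)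
          / (1 + (b - 1) * Real.cos θ ^ 2)) ^ 2)
        * (((b - 1) * (Real.cos θ * Real.cos θ - Real.sin θ * Real.sin θ)
              * (1 + (b - 1) * Real.cos θ ^ 2)
            - (b - 1) * (Real.sin θ * Real.cos θ)
              * ((b - 1) * (2 * Real.cos θ * (-Real.sin θ))))
          / (1 + (b - 1) * Real.cos θ ^ 2) ^ 2)
        = ((b - 1) * (Real.cos θ * Real.cos θ - Real.sin θ * Real.sin θ)
              * (1 + (b - 1) * Real.cos θ ^ 2)
            - (b - 1) * (Real.sin θ * Real.cos θ)
              * ((b - 1) * (2 * Real.cos θ * (-Real.sin θ))))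
          / ((1 + (b - 1) * Real.cos θ ^ 2) ^ 2
            + ((b - 1) * (Real.sin θ * Real.cos θ)) ^ 2) := by
      field_simp

    set M := (b - 1) * (Real.cos θ * Real.cos θ - Real.sin θ * Real.sin θ)
              * (1 + (b - 1) * Real.cos θ ^ 2)
            - (b - 1) * (Real.sin θ * Real.cos θ)
              * ((b - 1) * (2 * Real.cos θ * (-Real.sin θ))) with hM
    set Q := (1 + (b - 1) * Real.cos θ ^ 2) ^ 2
            + ((b - 1) * (Real.sin θ * Real.cos θ)) ^ 2 with hQ
    have key : (Q - M) * (1 + a ^ 2 * Real.cos θ ^ 2) = b * Q := by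
      rw [hM, hQ]
      linear_combination ((b - 1) + (b - 1) ^ 2 * Real.cos θ ^ 2) * hsc
        - (Real.cos θ ^ 2 * (1 + (b - 1) * (Real.sin θ ^ 2 + Real.cos θ ^ 2))) * hbsq
    simp only [Pi.div_apply]
    rw [e1, div_eq_div_iff hden.ne' hb0.ne', one_mul]
    have e2 : (1 : ℝ) - M / Q = (Q - M) / Q := by field_simp
    rw [e2, div_mul_eq_mul_div, eq_div_iff h2.ne']
    linear_combination -key
  have hcont : Continuous fun θ : ℝ => 1 / (1 + a ^ 2 * Real.cos θ ^ 2) := by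
    apply Continuous.div continuous_const
    · fun_prop
    · intro θ; positivity
  rw [intervalIntegral.integral_eq_sub_of_hasDerivAt (fun θ _ => hderiv θ)
    (hcont.intervalIntegrable _ _)]
  simp [hF, Real.sin_two_pi, Real.cos_two_pi]


lemma key2 (a : ℝ) :
    ∫ θ in (0:ℝ)..(2 * π), a ^ 2 * Real.cos θ ^ 2 / (1 + a ^ 2 * Real.cos θ ^ 2)
      = 2 * π - 2 * π / Real.sqrt (1 + a ^ 2) := by
  have hcont : Continuous fun θ : ℝ => 1 / (1 + a ^ 2 * Real.cos θ ^ 2) := by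
    apply Continuous.div continuous_const
    · fun_prop
    · intro θ; positivity
  have heq : ∀ θ : ℝ, a ^ 2 * Real.cos θ ^ 2 / (1 + a ^ 2 * Real.cos θ ^ 2)
      = 1 - 1 / (1 + a ^ 2 * Real.cos θ ^ 2) := by
    intro θ
    have h : (0:ℝ) < 1 + a ^ 2 * Real.cos θ ^ 2 := by positivity
    field_simp
    ring
  simp_rw [heq]
  rw [intervalIntegral.integral_sub (intervalIntegrable_const)
    (hcont.intervalIntegrable _ _), key1, intervalIntegral.integral_const]
  simp

lemma inner_int (u s : ℝ) :
    ∫ θ in (0:ℝ)..(2 * π), u ^ 2 * Real.cos θ ^ 2 / (1 + s ^ 2 * u ^ 2 * Real.cos θ ^ 2)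
      = 2 * π * u ^ 2 / (Real.sqrt (1 + u ^ 2 * s ^ 2) * (Real.sqrt (1 + u ^ 2 * s ^ 2) + 1)) := by
  set B := Real.sqrt (1 + u ^ 2 * s ^ 2) with hBdef
  have hBsq : B ^ 2 = 1 + u ^ 2 * s ^ 2 := Real.sq_sqrt (by positivity)
  have hB1 : 1 ≤ B := by nlinarith [Real.sqrt_nonneg (1 + u ^ 2 * s ^ 2)]
  have hB0 : 0 < B := lt_of_lt_of_le one_pos hB1
  rcases eq_or_ne s 0 with hs | hs
  · subst hs
    have hB : B = 1 := by simp [hBdef]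
    rw [hB]
    have h0 : ∀ θ : ℝ, u ^ 2 * Real.cos θ ^ 2 / (1 + 0 ^ 2 * u ^ 2 * Real.cos θ ^ 2)
        = u ^ 2 * Real.cos θ ^ 2 := by intro θ; norm_num
    simp_rw [h0]
    rw [intervalIntegral.integral_const_mul, integral_cos_sq]
    norm_num
    ring
  · have hkey := key2 (s * u)
    have heq : ∀ θ : ℝ, u ^ 2 * Real.cos θ ^ 2 / (1 + s ^ 2 * u ^ 2 * Real.cos θ ^ 2)
        = (1 / s ^ 2) * ((s * u) ^ 2 * Real.cos θ ^ 2 / (1 + (s * u) ^ 2 * Real.cos θ ^ 2)) := by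
      intro θ
      have h : (0:ℝ) < 1 + s ^ 2 * u ^ 2 * Real.cos θ ^ 2 := by positivity
      have h' : (1:ℝ) + (s * u) ^ 2 * Real.cos θ ^ 2 = 1 + s ^ 2 * u ^ 2 * Real.cos θ ^ 2 := by ring
      rw [h']
      field_simp
    simp_rw [heq]
    rw [intervalIntegral.integral_const_mul, hkey]
    have h' : Real.sqrt (1 + (s * u) ^ 2) = B := by rw [hBdef]; ring_nf
    rw [h']
    field_simp
    linear_combination hBsq

lemma ptw (x : ℝ) :
    x * Real.arctan x = ∫ s in (0:ℝ)..1, x ^ 2 / (1 + x ^ 2 * s ^ 2) := by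
  have hderiv : ∀ s : ℝ, HasDerivAt (fun s => x * Real.arctan (x * s))
      (x ^ 2 / (1 + x ^ 2 * s ^ 2)) s := by
    intro s
    have h1 : HasDerivAt (fun s : ℝ => x * s) x s := by
      simpa using (hasDerivAt_id s).const_mul x
    have h2 := (h1.arctan).const_mul x
    refine h2.congr_deriv ?_
    symm
    rw [mul_pow]
    field_simp
  have hcont : Continuous fun s : ℝ => x ^ 2 / (1 + x ^ 2 * s ^ 2) := by
    apply Continuous.div continuous_const
    · fun_prop
    · intro s; positivity
  rw [intervalIntegral.integral_eq_sub_of_hasDerivAt (fun s _ => hderiv s)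
    (hcont.intervalIntegrable _ _)]
  simp

lemma fubini_step (u : ℝ) :
    ∫ θ in (0:ℝ)..(2 * π), ∫ s in (0:ℝ)..1,
        (u * Real.cos θ) ^ 2 / (1 + (u * Real.cos θ) ^ 2 * s ^ 2)
      = ∫ s in (0:ℝ)..1, ∫ θ in (0:ℝ)..(2 * π),
        (u * Real.cos θ) ^ 2 / (1 + (u * Real.cos θ) ^ 2 * s ^ 2) := by
  have h2π : (0:ℝ) ≤ 2 * π := by positivity
  have hf : Continuous (Function.uncurry fun (θ s : ℝ) =>
      (u * Real.cos θ) ^ 2 / (1 + (u * Real.cos θ) ^ 2 * s ^ 2)) := by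
    apply Continuous.div
    · fun_prop
    · fun_prop
    · rintro ⟨θ, s⟩
      have : (0:ℝ) < 1 + (u * Real.cos θ) ^ 2 * s ^ 2 := by positivity
      exact ne_of_gt this
  have hint : MeasureTheory.Integrable
      (Function.uncurry fun (θ s : ℝ) =>
        (u * Real.cos θ) ^ 2 / (1 + (u * Real.cos θ) ^ 2 * s ^ 2))
      ((MeasureTheory.volume.restrict (Set.Ioc (0:ℝ) (2 * π))).prod
        (MeasureTheory.volume.restrict (Set.Ioc (0:ℝ) 1))) := by
    rw [MeasureTheory.Measure.prod_restrict]
    exact (hf.continuousOn.integrableOn_compact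
      (isCompact_Icc.prod isCompact_Icc)).mono_set
      (Set.prod_mono Set.Ioc_subset_Icc_self Set.Ioc_subset_Icc_self)
  have := MeasureTheory.integral_integral_swap hint
  rw [intervalIntegral.integral_of_le h2π, intervalIntegral.integral_of_le (by norm_num : (0:ℝ) ≤ 1)]
  simp_rw [intervalIntegral.integral_of_le h2π,
    intervalIntegral.integral_of_le (by norm_num : (0:ℝ) ≤ 1)]
  exact this

lemma main_int (u : ℝ) :
    ∫ θ in (0:ℝ)..(2 * π), (u * Real.cos θ) * Real.arctan (u * Real.cos θ)
      = 2 * π * (Real.sqrt (1 + u ^ 2) - 1) := by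
  have h1 : ∀ θ : ℝ, (u * Real.cos θ) * Real.arctan (u * Real.cos θ)
      = ∫ s in (0:ℝ)..1, (u * Real.cos θ) ^ 2 / (1 + (u * Real.cos θ) ^ 2 * s ^ 2) :=
    fun θ => ptw (u * Real.cos θ)
  simp_rw [h1]
  rw [fubini_step]
  have h2 : ∀ s : ℝ, (∫ θ in (0:ℝ)..(2 * π),
      (u * Real.cos θ) ^ 2 / (1 + (u * Real.cos θ) ^ 2 * s ^ 2))
      = 2 * π * u ^ 2 / (Real.sqrt (1 + u ^ 2 * s ^ 2) * (Real.sqrt (1 + u ^ 2 * s ^ 2) + 1)) := by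
    intro s
    have : ∀ θ : ℝ, (u * Real.cos θ) ^ 2 / (1 + (u * Real.cos θ) ^ 2 * s ^ 2)
        = u ^ 2 * Real.cos θ ^ 2 / (1 + s ^ 2 * u ^ 2 * Real.cos θ ^ 2) := by
      intro θ; ring_nf
    simp_rw [this]
    exact inner_int u s
  simp_rw [h2]
  -- outer FTC
  have hderiv : ∀ s : ℝ, HasDerivAt
      (fun s => 2 * π * u ^ 2 * s / (Real.sqrt (1 + u ^ 2 * s ^ 2) + 1))
      (2 * π * u ^ 2 / (Real.sqrt (1 + u ^ 2 * s ^ 2) * (Real.sqrt (1 + u ^ 2 * s ^ 2) + 1))) s := by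
    intro s
    set B := Real.sqrt (1 + u ^ 2 * s ^ 2) with hBdef
    have hpos : (0:ℝ) < 1 + u ^ 2 * s ^ 2 := by positivity
    have hBsq : B ^ 2 = 1 + u ^ 2 * s ^ 2 := Real.sq_sqrt hpos.le
    have hB1 : 1 ≤ B := by nlinarith [Real.sqrt_nonneg (1 + u ^ 2 * s ^ 2)]
    have hB0 : 0 < B := lt_of_lt_of_le one_pos hB1
    have hv : HasDerivAt (fun s : ℝ => 1 + u ^ 2 * s ^ 2) (2 * u ^ 2 * s) s := by
      have := ((hasDerivAt_pow 2 s).const_mul (u ^ 2)).const_add 1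
      refine this.congr_deriv ?_
      ring
    have hsqrt : HasDerivAt (fun s : ℝ => Real.sqrt (1 + u ^ 2 * s ^ 2))
        (1 / (2 * B) * (2 * u ^ 2 * s)) s :=
      (Real.hasDerivAt_sqrt hpos.ne').comp s hv
    have hden : HasDerivAt (fun s : ℝ => Real.sqrt (1 + u ^ 2 * s ^ 2) + 1)
        (1 / (2 * B) * (2 * u ^ 2 * s)) s := hsqrt.add_const 1
    have hnum : HasDerivAt (fun s : ℝ => 2 * π * u ^ 2 * s) (2 * π * u ^ 2) s := by
      simpa using (hasDerivAt_id s).const_mul (2 * π * u ^ 2)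
    have hBp1 : B + 1 ≠ 0 := by positivity
    have h := hnum.div hden hBp1
    refine h.congr_deriv ?_
    symm
    field_simp
    linear_combination (-(u ^ 2 * (1 + Real.sqrt (1 + u ^ 2 * s ^ 2)))) * (Real.sq_sqrt hpos.le : Real.sqrt (1 + u ^ 2 * s ^ 2) ^ 2 = 1 + u ^ 2 * s ^ 2)
  have hcont : Continuous fun s : ℝ =>
      2 * π * u ^ 2 / (Real.sqrt (1 + u ^ 2 * s ^ 2) * (Real.sqrt (1 + u ^ 2 * s ^ 2) + 1)) := by
    apply Continuous.div continuous_const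
    · fun_prop
    · intro s
      have h1 : (1:ℝ) ≤ Real.sqrt (1 + u ^ 2 * s ^ 2) := by
        nlinarith [Real.sq_sqrt (show (0:ℝ) ≤ 1 + u ^ 2 * s ^ 2 by positivity),
          Real.sqrt_nonneg (1 + u ^ 2 * s ^ 2)]
      positivity
  rw [intervalIntegral.integral_eq_sub_of_hasDerivAt (fun s _ => hderiv s)
    (hcont.intervalIntegrable _ _)]
  have hpos : (0:ℝ) < 1 + u ^ 2 := by positivity
  have hBsq : Real.sqrt (1 + u ^ 2) ^ 2 = 1 + u ^ 2 := Real.sq_sqrt hpos.le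
  have hB1 : 1 ≤ Real.sqrt (1 + u ^ 2) := by nlinarith [Real.sqrt_nonneg (1 + u ^ 2)]
  have hBp1 : Real.sqrt (1 + u ^ 2) + 1 ≠ 0 := by positivity
  rw [show (1:ℝ) + u ^ 2 * 1 ^ 2 = 1 + u ^ 2 by ring, show (1:ℝ) + u ^ 2 * 0 ^ 2 = 1 by ring, Real.sqrt_one]
  field_simp
  linear_combination (-2) * hBsq

theorem stmt_2 (u : ℝ) :
    (∫ θ in (0:ℝ)..(2 * π),
        (1 + (u * Real.cos θ) * Real.arctan (u * Real.cos θ)) / (4 * (1 + u ^ 2)))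
      = π / (2 * Real.sqrt (1 + u ^ 2)) := by
  have hint : IntervalIntegrable
      (fun θ => (u * Real.cos θ) * Real.arctan (u * Real.cos θ))
      MeasureTheory.volume 0 (2 * π) := by
    exact (((continuous_const.mul Real.continuous_cos).mul
      (Real.continuous_arctan.comp (continuous_const.mul Real.continuous_cos)))).intervalIntegrable _ _
  simp_rw [div_eq_mul_inv, add_mul, one_mul]
  rw [intervalIntegral.integral_add (intervalIntegrable_const)
    (hint.mul_const _), intervalIntegral.integral_const,
    intervalIntegral.integral_mul_const, main_int]
  have hpos : (0:ℝ) < 1 + u ^ 2 := by positivity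
  have hBsq : Real.sqrt (1 + u ^ 2) ^ 2 = 1 + u ^ 2 := Real.sq_sqrt hpos.le
  have hB1 : 1 ≤ Real.sqrt (1 + u ^ 2) := by nlinarith [Real.sqrt_nonneg (1 + u ^ 2)]
  have hB0 : (0:ℝ) < Real.sqrt (1 + u ^ 2) := lt_of_lt_of_le one_pos hB1
  have hne : (4 + u ^ 2 * 4 : ℝ)⁻¹ * (4 + u ^ 2 * 4) = 1 := inv_mul_cancel₀ (by positivity)
  field_simp
  linear_combination (4 * π * Real.sqrt (1 + u ^ 2)) * hne + (4 * π) * hBsq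
end

section
/- Let p(u) = (1+u²)^{−1/2} for u ≥ 0 and a = √((1+√5)/2). Define p̄(u) = 1 − a^{−5} u for 0 ≤ u ≤ a and p̄(u) = (1+u²)^{−1/2} for u ≥ a. Then p̄ is convex on [0,∞), p̄ ≤ p everywhere, and p̄ is the maximal convex function on [0,∞) not exceeding p. -/
open Real

noncomputable def aconst : ℝ := Real.sqrt ((1 + Real.sqrt 5) / 2)

noncomputable def pfun (u : ℝ) : ℝ := 1 / Real.sqrt (1 + u ^ 2)

noncomputable def pbar (u : ℝ) : ℝ :=
  if u ≤ aconst then 1 - u / aconst ^ 5 else 1 / Real.sqrt (1 + u ^ 2)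

lemma sqrt5_sq : Real.sqrt 5 ^ 2 = 5 := Real.sq_sqrt (by norm_num)
lemma sqrt5_gt : (2:ℝ) < Real.sqrt 5 := by
  nlinarith [sqrt5_sq, Real.sqrt_nonneg 5]

lemma ha2 : aconst ^ 2 = (1 + Real.sqrt 5) / 2 := by
  have h : (0:ℝ) ≤ (1 + Real.sqrt 5)/2 := by nlinarith [Real.sqrt_nonneg 5]
  simpa [aconst] using Real.sq_sqrt h

lemma ha2gt : (1:ℝ) < aconst ^ 2 := by rw [ha2]; nlinarith [sqrt5_gt]

lemma hb : aconst ^ 2 * aconst ^ 2 = aconst ^ 2 + 1 := by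
  rw [ha2]; nlinarith [sqrt5_sq]

lemma ha_pos : 0 < aconst := by
  have h0 : 0 ≤ aconst := by unfold aconst; positivity
  nlinarith [ha2gt, h0]

lemma ha1 : 1 < aconst := by nlinarith [ha2gt, ha_pos]

lemma sq1 (u : ℝ) : Real.sqrt (1 + u ^ 2) ^ 2 = 1 + u ^ 2 :=
  Real.sq_sqrt (by positivity)

lemma spos (u : ℝ) : 0 < Real.sqrt (1 + u ^ 2) :=
  Real.sqrt_pos.2 (by positivity)

lemma sone (u : ℝ) : 1 ≤ Real.sqrt (1 + u ^ 2) := by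
  nlinarith [sq1 u, spos u]

lemma polykey (b s u : ℝ) (hb : b * b = b + 1) (hb1 : 1 < b) (hs1 : 1 ≤ s)
    (hu : u ^ 2 = s ^ 2 - 1) :
    b ^ 2 * b ^ 2 * b * (s - 1) ^ 2 ≤ u ^ 2 * s ^ 2 := by
  have key : u^2*s^2 - b^2*b^2*b*(s-1)^2
      = (s-1)*(s-b)*(s^2+(b+1)*s-(3*b+2)) := by
    linear_combination s^2 * hu + ((s-1)*((b^3+b^2+2*b) - s*(b^3+b^2+2*b+2))) * hb
  rcases le_total s b with h | h
  · nlinarith [mul_nonneg (mul_nonneg (sub_nonneg.2 hs1) (sub_nonneg.2 h))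
      (by nlinarith : 0 ≤ (3*b+2) - (s^2+(b+1)*s))]
  · nlinarith [mul_nonneg (mul_nonneg (sub_nonneg.2 hs1) (sub_nonneg.2 h))
      (by nlinarith : 0 ≤ (s^2+(b+1)*s) - (3*b+2))]

lemma line_le_pfun {u : ℝ} (hu : 0 ≤ u) : 1 - u / aconst ^ 5 ≤ pfun u := by
  set s := Real.sqrt (1 + u ^ 2) with hs
  have hs2 : s ^ 2 = 1 + u ^ 2 := sq1 u
  have hs0 : 0 < s := spos u
  have hs1 : 1 ≤ s := sone u
  have hkey2 : (aconst ^ 5 * (s - 1)) ^ 2 ≤ (u * s) ^ 2 := by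
    have := polykey (aconst ^ 2) s u hb ha2gt hs1 (by linarith)
    nlinarith [this]
  have hkey : aconst ^ 5 * (s - 1) ≤ u * s :=
    le_of_pow_le_pow_left₀ two_ne_zero (mul_nonneg hu hs0.le) hkey2
  have ha5 : 0 < aconst ^ 5 := pow_pos ha_pos 5
  rw [pfun, le_div_iff₀ hs0]
  have : (1 - u / aconst ^ 5) * s * aconst ^ 5 ≤ 1 * aconst ^ 5 := by
    field_simp
    have e : aconst ^ 5 * (1 - u / aconst ^ 5) = aconst ^ 5 - u := by
      rw [mul_sub, mul_one, mul_div_assoc', mul_div_cancel_left₀ _ ha5.ne']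
    rw [e]; nlinarith [hkey]
  exact le_of_mul_le_mul_right this ha5

noncomputable def dfun (u : ℝ) : ℝ :=
  -(u / Real.sqrt (1 + u ^ 2)) / Real.sqrt (1 + u ^ 2) ^ 2

lemma hasDerivAt_pfun (u : ℝ) : HasDerivAt pfun (dfun u) u := by
  have h1 : HasDerivAt (fun x : ℝ => 1 + x ^ 2) (2 * u) u := by
    simpa using ((hasDerivAt_pow 2 u).const_add 1)
  have h2 : HasDerivAt (fun x : ℝ => Real.sqrt (1 + x ^ 2))
      (1 / (2 * Real.sqrt (1 + u ^ 2)) * (2 * u)) u :=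
    (Real.hasDerivAt_sqrt (by positivity)).comp u h1
  have h3 : HasDerivAt (fun x : ℝ => (Real.sqrt (1 + x ^ 2))⁻¹)
      (-(1 / (2 * Real.sqrt (1 + u ^ 2)) * (2 * u)) / Real.sqrt (1 + u ^ 2) ^ 2) u :=
    h2.inv (spos u).ne'
  have : pfun = fun x : ℝ => (Real.sqrt (1 + x ^ 2))⁻¹ := by
    funext x; rw [pfun, one_div]
  rw [this, dfun]
  convert h3 using 1
  have := (spos u).ne'
  field_simp

lemma dfun_mono : MonotoneOn dfun (Set.Ioi aconst) := by
  intro x hx y hy hxy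
  simp only [Set.mem_Ioi] at hx hy
  have hx1 : 1 < x := lt_trans ha1 hx
  have hy1 : 1 < y := lt_trans ha1 hy
  set p := Real.sqrt (1 + x ^ 2) with hp
  set q := Real.sqrt (1 + y ^ 2) with hq
  have hp2 : p ^ 2 = 1 + x ^ 2 := sq1 x
  have hq2 : q ^ 2 = 1 + y ^ 2 := sq1 y
  have hp0 : 0 < p := spos x
  have hq0 : 0 < q := spos y
  -- key : y * p^3 ≤ x * q^3
  have hsq : (y * p ^ 3) ^ 2 ≤ (x * q ^ 3) ^ 2 := by
    have h6p : (p ^ 3) ^ 2 = (1 + x ^ 2) ^ 3 := by rw [← hp2]; ring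
    have h6q : (q ^ 3) ^ 2 = (1 + y ^ 2) ^ 3 := by rw [← hq2]; ring
    have key : y ^ 2 * (1 + x ^ 2) ^ 3 ≤ x ^ 2 * (1 + y ^ 2) ^ 3 := by
      have h1x : 1 ≤ x ^ 2 := by nlinarith
      have h1y : 1 ≤ y ^ 2 := by nlinarith
      have h1xy : 1 ≤ x ^ 2 * y ^ 2 := by nlinarith
      have hbig : 0 ≤ x^2*y^2*(3 + x^2 + y^2) - 1 := by nlinarith
      nlinarith [mul_nonneg (sub_nonneg.2 (sq_le_sq' (by linarith) hxy)) hbig]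
    calc (y * p ^ 3) ^ 2 = y ^ 2 * (1 + x ^ 2) ^ 3 := by rw [← h6p]; ring
      _ ≤ x ^ 2 * (1 + y ^ 2) ^ 3 := key
      _ = (x * q ^ 3) ^ 2 := by rw [← h6q]; ring
  have hkey : y * p ^ 3 ≤ x * q ^ 3 :=
    le_of_pow_le_pow_left₀ two_ne_zero (by positivity) hsq
  rw [dfun, dfun, ← hp, ← hq]
  rw [div_le_div_iff₀ (by positivity) (by positivity)]
  rw [neg_mul, neg_mul, neg_le_neg_iff, div_mul_eq_mul_div, div_mul_eq_mul_div,
    div_le_div_iff₀ hq0 hp0]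
  linarith [hkey]

lemma conv_pfun : ConvexOn ℝ (Set.Ici aconst) pfun := by
  have hderiv : deriv pfun = dfun := funext fun u => (hasDerivAt_pfun u).deriv
  have hdiff : Differentiable ℝ pfun := fun u => (hasDerivAt_pfun u).differentiableAt
  apply MonotoneOn.convexOn_of_deriv (convex_Ici _) hdiff.continuous.continuousOn
    hdiff.differentiableOn
  rw [hderiv, interior_Ici]
  exact dfun_mono

lemma pfun_a : pfun aconst = 1 / aconst ^ 2 := by
  have h : 1 + aconst ^ 2 = (aconst ^ 2) ^ 2 := by nlinarith [hb]
  rw [pfun, h, Real.sqrt_sq (by positivity)]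

lemma pbar_le (u : ℝ) (h : u ≤ aconst) : pbar u = 1 - u / aconst ^ 5 := if_pos h

lemma pbar_ge {u : ℝ} (h : aconst ≤ u) : pbar u = pfun u := by
  rcases eq_or_lt_of_le h with rfl | h'
  · rw [pbar, if_pos le_rfl, pfun_a]
    have h5 : aconst ^ 5 = aconst * (aconst ^ 2 * aconst ^ 2) := by ring
    rw [h5, hb]
    have h0 : aconst ≠ 0 := ha_pos.ne'
    have h1 : aconst ^ 2 + 1 ≠ 0 := by positivity
    field_simp
    nlinarith [hb, ha_pos]
  · rw [pbar, if_neg (not_le.2 h'), pfun]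

lemma slope_line (s t : ℝ) (hst : s < t) :
    (1 - t / aconst ^ 5 - (1 - s / aconst ^ 5)) / (t - s) = -(1 / aconst ^ 5) := by
  rw [div_eq_iff (sub_ne_zero.2 hst.ne')]
  ring

lemma pfun_line_a : pfun aconst = 1 - aconst / aconst ^ 5 := by
  rw [← pbar_ge le_rfl, pbar_le aconst le_rfl]

theorem stmt_5 :
    ConvexOn ℝ (Set.Ici (0:ℝ)) pbar ∧
    (∀ u ≥ (0:ℝ), pbar u ≤ pfun u) ∧
    (∀ g : ℝ → ℝ, ConvexOn ℝ (Set.Ici (0:ℝ)) g → (∀ u ≥ (0:ℝ), g u ≤ pfun u) →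
      ∀ u ≥ (0:ℝ), g u ≤ pbar u) := by
  have ha5 : 0 < aconst ^ 5 := pow_pos ha_pos 5
  refine ⟨?_, ?_, ?_⟩
  · rw [convexOn_iff_slope_mono_adjacent]
    refine ⟨convex_Ici _, ?_⟩
    intro x y z hx hz hxy hyz
    simp only [Set.mem_Ici] at hx hz
    have hy0 : 0 ≤ y := le_trans hx hxy.le
    rcases le_or_gt z aconst with hza | hza
    · rw [pbar_le x (by linarith), pbar_le y (by linarith), pbar_le z hza,
        slope_line x y hxy, slope_line y z hyz]
    · rcases le_or_gt y aconst with hya | hya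
      · rw [pbar_le x (by linarith), pbar_le y hya, pbar_ge hza.le,
          slope_line x y hxy, le_div_iff₀ (by linarith : (0:ℝ) < z - y)]
        have hlz := line_le_pfun (le_trans hy0 hyz.le)
        have e : -(1 / aconst ^ 5) * (z - y)
            = (1 - z / aconst ^ 5) - (1 - y / aconst ^ 5) := by ring
        linarith [hlz, e]
      · rcases le_or_gt aconst x with hax | hax
        · rw [pbar_ge hax, pbar_ge hya.le, pbar_ge hza.le]
          exact conv_pfun.slope_mono_adjacent hax hza.le hxy hyz
        · rw [pbar_le x hax.le, pbar_ge hya.le, pbar_ge hza.le]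
          have step2 : (pfun y - pfun aconst) / (y - aconst) ≤
              (pfun z - pfun y) / (z - y) :=
            conv_pfun.slope_mono_adjacent Set.self_mem_Ici hza.le hya hyz
          refine le_trans ?_ step2
          rw [div_le_div_iff₀ (by linarith : (0:ℝ) < y - x)
            (by linarith : (0:ℝ) < y - aconst), pfun_line_a]
          have hly := line_le_pfun hy0
          have e2 : (pfun y - (1 - aconst / aconst ^ 5)) * (y - x)
              - (pfun y - (1 - x / aconst ^ 5)) * (y - aconst)
              = (aconst - x) * (pfun y - (1 - y / aconst ^ 5)) := by ring
          linarith [e2, mul_nonneg (by linarith : (0:ℝ) ≤ aconst - x)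
            (by linarith : (0:ℝ) ≤ pfun y - (1 - y / aconst ^ 5))]
  · intro u hu
    rcases le_or_gt u aconst with h | h
    · rw [pbar_le u h]; exact line_le_pfun hu
    · rw [pbar_ge h.le]
  · intro g hg hgp u hu
    rcases le_or_gt u aconst with h | h
    · rw [pbar_le u h]
      set t := u / aconst with ht
      have ht0 : 0 ≤ t := div_nonneg hu ha_pos.le
      have ht1 : t ≤ 1 := (div_le_one ha_pos).2 h
      have hcomb := hg.2 (Set.self_mem_Ici) (Set.mem_Ici.2 ha_pos.le)
        (by linarith : (0:ℝ) ≤ 1 - t) ht0 (by ring)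
      simp only [smul_eq_mul, mul_zero, zero_add] at hcomb
      have hta : t * aconst = u := by
        rw [ht, div_mul_cancel₀ _ ha_pos.ne']
      rw [hta] at hcomb
      have hp0 : pfun 0 = 1 := by simp [pfun]
      have hg0 : g 0 ≤ 1 := by
        have := hgp 0 le_rfl
        rwa [hp0] at this
      have hga : g aconst ≤ 1 / aconst ^ 2 := by
        have := hgp aconst ha_pos.le
        rwa [pfun_a] at this
      have he : (1 - t) * 1 + t * (1 / aconst ^ 2) = 1 - u / aconst ^ 5 := by
        rw [ht]
        have h0 : aconst ≠ 0 := ha_pos.ne'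
        field_simp
        linear_combination (-u) * hb
      nlinarith [hcomb, he, mul_nonneg (by linarith : (0:ℝ) ≤ 1 - t)
        (by linarith : (0:ℝ) ≤ 1 - g 0),
        mul_nonneg ht0 (by linarith : (0:ℝ) ≤ 1 / aconst ^ 2 - g aconst)]
    · rw [pbar_ge h.le]
      exact hgp u hu
end

section
/- Let q : [0,∞) → (0,∞) be continuous, monotone non-decreasing, with q(u) → +∞ as u → +∞, and let Q(u) = ∫₀ᵘ q(ν) dν. Then the function F(U) = U − Q(U)/q(U) is continuous, monotone non-decreasing, satisfies F(0) = 0, and F(U) → +∞ as U → +∞. In particular, for every h ≥ 0 the equation U − Q(U)/q(U) = h has a solution U ≥ 0. -/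
open Filter intervalIntegral

theorem stmt_9 (q : ℝ → ℝ)
    (hq : ContinuousOn q (Set.Ici 0))
    (hpos : ∀ u ≥ (0:ℝ), 0 < q u)
    (hmono : MonotoneOn q (Set.Ici 0))
    (htop : Tendsto q atTop atTop) :
    let Q : ℝ → ℝ := fun u => ∫ ν in (0:ℝ)..u, q ν
    let F : ℝ → ℝ := fun U => U - Q U / q U
    ContinuousOn F (Set.Ici 0) ∧
    MonotoneOn F (Set.Ici 0) ∧
    F 0 = 0 ∧
    Tendsto F atTop atTop ∧
    ∀ h ≥ (0:ℝ), ∃ U ≥ (0:ℝ), F U = h := by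
  intro Q F
  -- integrability
  have hint : ∀ a b : ℝ, 0 ≤ a → a ≤ b → IntervalIntegrable q MeasureTheory.volume a b := by
    intro a b ha hab
    apply MonotoneOn.intervalIntegrable
    apply hmono.mono
    rw [Set.uIcc_of_le hab]
    intro x hx
    exact le_trans ha hx.1
  have hQ0 : Q 0 = 0 := intervalIntegral.integral_same
  have hQnn : ∀ u ≥ (0:ℝ), 0 ≤ Q u := by
    intro u hu
    apply intervalIntegral.integral_nonneg hu
    intro x hx
    exact (hpos x hx.1).le
  -- piece estimate : ∫ ν in a..b, q ν ≤ (b - a) * q b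
  have hseg : ∀ a b : ℝ, 0 ≤ a → a ≤ b → (∫ ν in a..b, q ν) ≤ (b - a) * q b := by
    intro a b ha hab
    have : (∫ ν in a..b, q ν) ≤ ∫ _ν in a..b, q b := by
      apply intervalIntegral.integral_mono_on hab (hint a b ha hab) intervalIntegrable_const
      intro x hx
      exact hmono (le_trans ha hx.1) (le_trans ha hab) hx.2
    simpa using this
  have hQle : ∀ u ≥ (0:ℝ), Q u ≤ u * q u := by
    intro u hu
    simpa using hseg 0 u le_rfl hu
  have hsplit : ∀ a b : ℝ, 0 ≤ a → a ≤ b → Q b = Q a + ∫ ν in a..b, q ν := by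
    intro a b ha hab
    exact (intervalIntegral.integral_add_adjacent_intervals (hint 0 a le_rfl ha)
      (hint a b ha hab)).symm
  -- continuity of Q
  have hQcont : ContinuousOn Q (Set.Ici 0) := by
    intro x hx
    have hx1 : (0:ℝ) ≤ x + 1 := by
      have : (0:ℝ) ≤ x := hx
      linarith
    have h1 : ContinuousOn Q (Set.uIcc 0 (x + 1)) :=
      intervalIntegral.continuousOn_primitive_interval' (hint 0 (x + 1) le_rfl hx1)
        Set.left_mem_uIcc
    have hxmem : x ∈ Set.uIcc 0 (x + 1) := by
      rw [Set.uIcc_of_le hx1]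
      exact ⟨hx, by linarith⟩
    refine (h1 x hxmem).mono_of_mem_nhdsWithin ?_
    have h2 : Set.uIcc 0 (x + 1) = Set.Ici 0 ∩ Set.Iic (x + 1) := by
      rw [Set.uIcc_of_le hx1, ← Set.Ici_inter_Iic]
    rw [h2]
    exact Filter.inter_mem self_mem_nhdsWithin
      (mem_nhdsWithin_of_mem_nhds (Iic_mem_nhds (by linarith)))
  -- continuity of F
  have hFcont : ContinuousOn F (Set.Ici 0) := by
    apply ContinuousOn.sub continuousOn_id
    exact hQcont.div hq (fun x hx => (hpos x hx).ne')
  -- monotonicity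
  have hFmono : MonotoneOn F (Set.Ici 0) := by
    intro a ha b hb hab
    have hqa : 0 < q a := hpos a ha
    have hqb : 0 < q b := hpos b hb
    have hqab : q a ≤ q b := hmono ha hb hab
    have h1 : Q b ≤ Q a + (b - a) * q b := by
      rw [hsplit a b ha hab]
      linarith [hseg a b ha hab]
    have h2 : Q b / q b ≤ Q a / q b + (b - a) := by
      rw [div_le_iff₀ hqb] at *
      calc Q b ≤ Q a + (b - a) * q b := h1
        _ = (Q a / q b) * q b + (b - a) * q b := by field_simp
        _ = (Q a / q b + (b - a)) * q b := by ring
    have h3 : Q a / q b ≤ Q a / q a :=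
      div_le_div_of_nonneg_left (hQnn a ha) hqa hqab
    show a - Q a / q a ≤ b - Q b / q b
    linarith
  -- F 0 = 0
  have hF0 : F 0 = 0 := by
    show (0:ℝ) - Q 0 / q 0 = 0
    rw [hQ0]
    simp
  -- tendsto atTop
  have hFtop : Tendsto F atTop atTop := by
    rw [tendsto_atTop]
    intro M
    set A : ℝ := max (2 * M) 0 with hA
    have hA0 : 0 ≤ A := le_max_right _ _
    have hA2M : 2 * M ≤ A := le_max_left _ _
    have hqA : 0 < q A := hpos A hA0
    have hev : ∀ᶠ U in atTop, 2 * q A ≤ q U := htop.eventually (eventually_ge_atTop _)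
    filter_upwards [hev, eventually_ge_atTop A] with U hqU hUA
    have hU0 : 0 ≤ U := le_trans hA0 hUA
    have hqUpos : 0 < q U := hpos U hU0
    have h1 : Q U ≤ A * q A + (U - A) * q U := by
      rw [hsplit A U hA0 hUA]
      linarith [hQle A hA0, hseg A U hA0 hUA]
    have h2 : Q U / q U ≤ A * q A / q U + (U - A) := by
      rw [div_le_iff₀ hqUpos]
      calc Q U ≤ A * q A + (U - A) * q U := h1
        _ = (A * q A / q U) * q U + (U - A) * q U := by field_simp
        _ = (A * q A / q U + (U - A)) * q U := by ring
    have h3 : A * q A / q U ≤ A * q A / (2 * q A) :=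
      div_le_div_of_nonneg_left (mul_nonneg hA0 hqA.le) (by linarith) hqU
    have h4 : A * q A / (2 * q A) = A / 2 := by
      field_simp
    have : M ≤ A - Q U / q U + (U - A) := by
      rw [h4] at h3
      have : Q U / q U ≤ A / 2 + (U - A) := by linarith
      linarith
    show M ≤ U - Q U / q U
    linarith
  refine ⟨hFcont, hFmono, hF0, hFtop, ?_⟩
  intro h hh
  obtain ⟨B, hB⟩ := (hFtop.eventually (eventually_ge_atTop h)).and
    (eventually_ge_atTop (0:ℝ)) |>.exists
  have hB0 : (0:ℝ) ≤ B := hB.2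
  have hIVT := intermediate_value_Icc hB0 (hFcont.mono (Set.Icc_subset_Ici_self))
  have hmem : h ∈ Set.Icc (F 0) (F B) := by
    rw [hF0]
    exact ⟨hh, hB.1⟩
  obtain ⟨U, hU, hFU⟩ := hIVT hmem
  exact ⟨U, hU.1, hFU⟩
end

section
/- Let ϱ : [−1,1] → ℝ be continuous and strictly decreasing. For c ∈ (0,1) and φ ∈ (0, π/2), define J(c, φ) = c³ ∫₀^π sin²θ · ϱ(c sin(φ + θ)) dθ. Then J(c, π/2) > J(c, φ). -/
open Real intervalIntegral

private lemma sin_sq_sub_sin_sq (x y : ℝ) :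
    Real.sin x ^ 2 - Real.sin y ^ 2 = Real.sin (x + y) * Real.sin (x - y) := by
  rw [Real.sin_add, Real.sin_sub]
  nlinarith [Real.sin_sq_add_cos_sq x, Real.sin_sq_add_cos_sq y]

set_option maxHeartbeats 2000000 in
theorem stmt_14 (ϱ : ℝ → ℝ)
    (hϱ : ContinuousOn ϱ (Set.Icc (-1) 1))
    (hanti : StrictAntiOn ϱ (Set.Icc (-1) 1))
    (c φ : ℝ) (hc : c ∈ Set.Ioo (0:ℝ) 1) (hφ : φ ∈ Set.Ioo (0:ℝ) (π / 2)) :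
    (c ^ 3 * ∫ θ in (0:ℝ)..π, Real.sin θ ^ 2 * ϱ (c * Real.sin (π / 2 + θ)))
      > c ^ 3 * ∫ θ in (0:ℝ)..π, Real.sin θ ^ 2 * ϱ (c * Real.sin (φ + θ)) := by
  obtain ⟨hc0, hc1⟩ := hc
  obtain ⟨hφ0, hφ2⟩ := hφ
  have hπ := Real.pi_pos
  obtain ⟨a, ha_def⟩ : ∃ a : ℝ, a = π / 2 - φ := ⟨_, rfl⟩
  have ha0 : 0 < a := by rw [ha_def]; linarith
  have ha2 : a < π / 2 := by rw [ha_def]; linarith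
  have haπ : a < π := by linarith
  obtain ⟨L, hL_def⟩ : ∃ L : ℝ, L = π - a := ⟨_, rfl⟩
  have hL0 : 0 < L := by rw [hL_def]; linarith
  have hLπ : L < π := by rw [hL_def]; linarith
  have hmem : ∀ u : ℝ, c * Real.cos u ∈ Set.Icc (-1:ℝ) 1 := by
    intro u
    constructor <;> nlinarith [Real.cos_le_one u, Real.neg_one_le_cos u]
  have hF : Continuous fun u => ϱ (c * Real.cos u) :=
    hϱ.comp_continuous (continuous_const.mul Real.continuous_cos) hmem
  have Flt : ∀ x y : ℝ, x ∈ Set.Icc (0:ℝ) π → y ∈ Set.Icc (0:ℝ) π → x < y →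
      ϱ (c * Real.cos x) < ϱ (c * Real.cos y) := by
    intro x y hx hy hxy
    exact hanti (hmem y) (hmem x)
      (mul_lt_mul_of_pos_left (Real.cos_lt_cos_of_nonneg_of_le_pi hx.1 hy.2 hxy) hc0)
  have Fle : ∀ x y : ℝ, x ∈ Set.Icc (0:ℝ) π → y ∈ Set.Icc (0:ℝ) π → x ≤ y →
      ϱ (c * Real.cos x) ≤ ϱ (c * Real.cos y) := by
    intro x y hx hy hxy
    rcases eq_or_lt_of_le hxy with h | h
    · rw [h]
    · exact (Flt x y hx hy h).le
  have cont1 : Continuous fun u : ℝ => Real.sin u ^ 2 * ϱ (c * Real.cos u) :=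
    (Real.continuous_sin.pow 2).mul hF
  have cont2 : Continuous fun u : ℝ => Real.sin (u + a) ^ 2 * ϱ (c * Real.cos u) :=
    ((Real.continuous_sin.comp (continuous_id.add continuous_const)).pow 2).mul hF
  -- Step 1: rewrite the two integrals
  have h1 : (∫ θ in (0:ℝ)..π, Real.sin θ ^ 2 * ϱ (c * Real.sin (π / 2 + θ)))
      = ∫ u in (0:ℝ)..π, Real.sin u ^ 2 * ϱ (c * Real.cos u) := by
    apply intervalIntegral.integral_congr
    intro θ _
    simp [Real.sin_add]
  have h2 : (∫ θ in (0:ℝ)..π, Real.sin θ ^ 2 * ϱ (c * Real.sin (φ + θ)))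
      = ∫ u in (-a)..L, Real.sin (u + a) ^ 2 * ϱ (c * Real.cos u) := by
    have e1 : (∫ θ in (0:ℝ)..π, Real.sin θ ^ 2 * ϱ (c * Real.sin (φ + θ)))
        = ∫ θ in (0:ℝ)..π, Real.sin (θ - a + a) ^ 2 * ϱ (c * Real.cos (θ - a)) := by
      apply intervalIntegral.integral_congr
      intro θ _
      dsimp only
      have harg : Real.cos (θ - a) = Real.sin (φ + θ) := by
        rw [show θ - a = φ + θ - π / 2 by rw [ha_def]; ring, Real.cos_sub,
          Real.cos_pi_div_two, Real.sin_pi_div_two]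
        ring
      rw [show θ - a + a = θ by ring, harg]
    have e2 : (∫ θ in (0:ℝ)..π, Real.sin (θ - a + a) ^ 2 * ϱ (c * Real.cos (θ - a)))
        = ∫ u in ((0:ℝ) - a)..(π - a), Real.sin (u + a) ^ 2 * ϱ (c * Real.cos u) :=
      intervalIntegral.integral_comp_sub_right
        (fun u => Real.sin (u + a) ^ 2 * ϱ (c * Real.cos u)) a
    rw [e1, e2, show (0:ℝ) - a = -a by ring, ← hL_def]
  rw [h1, h2]
  -- split the integrals
  have split1 : (∫ u in (0:ℝ)..π, Real.sin u ^ 2 * ϱ (c * Real.cos u))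
      = (∫ u in (0:ℝ)..L, Real.sin u ^ 2 * ϱ (c * Real.cos u))
        + ∫ u in L..π, Real.sin u ^ 2 * ϱ (c * Real.cos u) :=
    (intervalIntegral.integral_add_adjacent_intervals
      (cont1.intervalIntegrable _ _) (cont1.intervalIntegrable _ _)).symm
  have split2 : (∫ u in (-a)..L, Real.sin (u + a) ^ 2 * ϱ (c * Real.cos u))
      = (∫ u in (-a)..(0:ℝ), Real.sin (u + a) ^ 2 * ϱ (c * Real.cos u))
        + ∫ u in (0:ℝ)..L, Real.sin (u + a) ^ 2 * ϱ (c * Real.cos u) :=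
    (intervalIntegral.integral_add_adjacent_intervals
      (cont2.intervalIntegrable _ _) (cont2.intervalIntegrable _ _)).symm
  -- continuity of shifted integrands
  have hFπ : Continuous fun x : ℝ => ϱ (c * Real.cos (π - x)) :=
    hF.comp (continuous_const.sub continuous_id)
  have hFa : Continuous fun x : ℝ => ϱ (c * Real.cos (a - x)) :=
    hF.comp (continuous_const.sub continuous_id)
  -- Boundary term: strict inequality
  have hB : (∫ u in (-a)..(0:ℝ), Real.sin (u + a) ^ 2 * ϱ (c * Real.cos u))
      < ∫ u in L..π, Real.sin u ^ 2 * ϱ (c * Real.cos u) := by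
    have h4 : (∫ x in (0:ℝ)..a, Real.sin (π - x) ^ 2 * ϱ (c * Real.cos (π - x)))
        = ∫ u in (π - a)..(π - 0), Real.sin u ^ 2 * ϱ (c * Real.cos u) :=
      intervalIntegral.integral_comp_sub_left
        (fun u => Real.sin u ^ 2 * ϱ (c * Real.cos u)) π
    rw [show π - (0:ℝ) = π by ring, ← hL_def] at h4
    have e4 : (∫ u in L..π, Real.sin u ^ 2 * ϱ (c * Real.cos u))
        = ∫ x in (0:ℝ)..a, Real.sin x ^ 2 * ϱ (c * Real.cos (π - x)) := by
      rw [← h4]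
      apply intervalIntegral.integral_congr
      intro x _
      dsimp only
      rw [Real.sin_pi_sub]
    have h5 : (∫ x in (0:ℝ)..a, Real.sin (x - a + a) ^ 2 * ϱ (c * Real.cos (x - a)))
        = ∫ u in ((0:ℝ) - a)..(a - a), Real.sin (u + a) ^ 2 * ϱ (c * Real.cos u) :=
      intervalIntegral.integral_comp_sub_right
        (fun u => Real.sin (u + a) ^ 2 * ϱ (c * Real.cos u)) a
    rw [show (0:ℝ) - a = -a by ring, show a - a = (0:ℝ) by ring] at h5
    have e5 : (∫ u in (-a)..(0:ℝ), Real.sin (u + a) ^ 2 * ϱ (c * Real.cos u))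
        = ∫ x in (0:ℝ)..a, Real.sin x ^ 2 * ϱ (c * Real.cos (a - x)) := by
      rw [← h5]
      apply intervalIntegral.integral_congr
      intro x _
      dsimp only
      rw [show x - a + a = x by ring, show x - a = -(a - x) by ring, Real.cos_neg]
    rw [e4, e5, ← sub_pos, ← intervalIntegral.integral_sub
      (f := fun x => Real.sin x ^ 2 * ϱ (c * Real.cos (π - x)))
      (g := fun x => Real.sin x ^ 2 * ϱ (c * Real.cos (a - x)))
      (((Real.continuous_sin.pow 2).mul hFπ).intervalIntegrable _ _)
      (((Real.continuous_sin.pow 2).mul hFa).intervalIntegrable _ _)]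
    apply intervalIntegral.intervalIntegral_pos_of_pos_on
    · exact (((Real.continuous_sin.pow 2).mul hFπ).sub
        ((Real.continuous_sin.pow 2).mul hFa)).intervalIntegrable _ _
    · intro x hx
      obtain ⟨hx1, hx2⟩ := hx
      have hs : 0 < Real.sin x := Real.sin_pos_of_pos_of_lt_pi hx1 (by linarith)
      have hFlt : ϱ (c * Real.cos (a - x)) < ϱ (c * Real.cos (π - x)) :=
        Flt _ _ ⟨by linarith, by linarith⟩ ⟨by linarith, by linarith⟩ (by linarith)
      have hs2 : 0 < Real.sin x ^ 2 := pow_pos hs 2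
      nlinarith
    · exact ha0
  -- Middle term: nonneg
  have hM : (∫ u in (0:ℝ)..L, Real.sin (u + a) ^ 2 * ϱ (c * Real.cos u))
      ≤ ∫ u in (0:ℝ)..L, Real.sin u ^ 2 * ϱ (c * Real.cos u) := by
    rw [← sub_nonneg, ← intervalIntegral.integral_sub (cont1.intervalIntegrable _ _)
      (cont2.intervalIntegrable _ _)]
    have ec : (∫ u in (0:ℝ)..L, (Real.sin u ^ 2 * ϱ (c * Real.cos u)
          - Real.sin (u + a) ^ 2 * ϱ (c * Real.cos u)))
        = ∫ u in (0:ℝ)..L,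
            (Real.sin u ^ 2 - Real.sin (u + a) ^ 2) * ϱ (c * Real.cos u) := by
      apply intervalIntegral.integral_congr
      intro u _
      dsimp only
      ring
    rw [ec]
    have hDc : Continuous fun u : ℝ =>
        (Real.sin u ^ 2 - Real.sin (u + a) ^ 2) * ϱ (c * Real.cos u) :=
      ((Real.continuous_sin.pow 2).sub
        ((Real.continuous_sin.comp (continuous_id.add continuous_const)).pow 2)).mul hF
    have hDc' : Continuous fun u : ℝ =>
        (Real.sin (L - u) ^ 2 - Real.sin (L - u + a) ^ 2) * ϱ (c * Real.cos (L - u)) := by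
      exact hDc.comp (show Continuous fun x : ℝ => L - x from
        continuous_const.sub continuous_id)
    have h6 : (∫ x in (0:ℝ)..L, (Real.sin (L - x) ^ 2 - Real.sin (L - x + a) ^ 2)
          * ϱ (c * Real.cos (L - x)))
        = ∫ u in (L - L)..(L - 0),
            (Real.sin u ^ 2 - Real.sin (u + a) ^ 2) * ϱ (c * Real.cos u) :=
      intervalIntegral.integral_comp_sub_left
        (fun u => (Real.sin u ^ 2 - Real.sin (u + a) ^ 2) * ϱ (c * Real.cos u)) L
    rw [show L - L = (0:ℝ) by ring, show L - (0:ℝ) = L by ring] at h6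
    have hsin_a : 0 < Real.sin a := Real.sin_pos_of_pos_of_lt_pi ha0 haπ
    have key : ∀ u ∈ Set.Icc (0:ℝ) L,
        0 ≤ (Real.sin u ^ 2 - Real.sin (u + a) ^ 2) * ϱ (c * Real.cos u)
          + (Real.sin (L - u) ^ 2 - Real.sin (L - u + a) ^ 2)
              * ϱ (c * Real.cos (L - u)) := by
      intro u hu
      obtain ⟨hu1, hu2⟩ := hu
      have s1 : Real.sin (L - u) = Real.sin (a + u) := by
        rw [show L - u = π - (a + u) by rw [hL_def]; ring, Real.sin_pi_sub]
      have s2 : Real.sin (L - u + a) = Real.sin u := by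
        rw [show L - u + a = π - u by rw [hL_def]; ring, Real.sin_pi_sub]
      rw [s1, s2, show a + u = u + a from add_comm a u]
      have e9 : Real.sin u ^ 2 - Real.sin (u + a) ^ 2
          = -(Real.sin (2 * u + a) * Real.sin a) := by
        rw [sin_sq_sub_sin_sq u (u + a), show u - (u + a) = -a by ring,
          show u + (u + a) = 2 * u + a by ring, Real.sin_neg]
        ring
      have e9' : Real.sin (u + a) ^ 2 - Real.sin u ^ 2
          = Real.sin (2 * u + a) * Real.sin a := by linarith [e9]
      rw [e9, e9']
      have huI : u ∈ Set.Icc (0:ℝ) π := ⟨hu1, by linarith⟩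
      have hLuI : L - u ∈ Set.Icc (0:ℝ) π := ⟨by linarith, by linarith⟩
      have hL' : L = π - a := hL_def
      rcases le_total u (L - u) with h | h
      · have hF_le : ϱ (c * Real.cos u) ≤ ϱ (c * Real.cos (L - u)) :=
          Fle _ _ huI hLuI h
        have hs2 : 0 ≤ Real.sin (2 * u + a) := by
          apply Real.sin_nonneg_of_nonneg_of_le_pi
          · linarith
          · rw [hL'] at h; linarith
        nlinarith [mul_nonneg (mul_nonneg hs2 hsin_a.le) (sub_nonneg.2 hF_le)]
      · have hF_le : ϱ (c * Real.cos (L - u)) ≤ ϱ (c * Real.cos u) :=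
          Fle _ _ hLuI huI h
        have hs2 : Real.sin (2 * u + a) ≤ 0 := by
          rw [show Real.sin (2 * u + a) = -Real.sin (2 * u + a - π) by
            rw [Real.sin_sub_pi]; ring]
          simp only [neg_nonpos]
          apply Real.sin_nonneg_of_nonneg_of_le_pi
          · rw [hL'] at h; linarith
          · rw [hL'] at hu2; linarith
        nlinarith [mul_nonneg (mul_nonneg (neg_nonneg.2 hs2) hsin_a.le)
          (sub_nonneg.2 hF_le)]
    have hnn : 0 ≤ ∫ u in (0:ℝ)..L,
        ((Real.sin u ^ 2 - Real.sin (u + a) ^ 2) * ϱ (c * Real.cos u)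
          + (Real.sin (L - u) ^ 2 - Real.sin (L - u + a) ^ 2)
              * ϱ (c * Real.cos (L - u))) :=
      intervalIntegral.integral_nonneg hL0.le key
    have hadd : (∫ u in (0:ℝ)..L,
          ((Real.sin u ^ 2 - Real.sin (u + a) ^ 2) * ϱ (c * Real.cos u)
            + (Real.sin (L - u) ^ 2 - Real.sin (L - u + a) ^ 2)
                * ϱ (c * Real.cos (L - u))))
        = (∫ u in (0:ℝ)..L,
            (Real.sin u ^ 2 - Real.sin (u + a) ^ 2) * ϱ (c * Real.cos u))
          + ∫ u in (0:ℝ)..L, (Real.sin (L - u) ^ 2 - Real.sin (L - u + a) ^ 2)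
              * ϱ (c * Real.cos (L - u)) :=
      intervalIntegral.integral_add (hDc.intervalIntegrable _ _)
        (hDc'.intervalIntegrable _ _)
    linarith [h6, hadd, hnn]
  -- combine
  have hpow : (0:ℝ) < c ^ 3 := pow_pos hc0 3
  apply mul_lt_mul_of_pos_left _ hpow
  rw [split1, split2]
  linarith
end

section
/- Let ϱ : [−1,1] → ℝ be continuously differentiable with ϱ' < 0 and ϱ' monotone non-decreasing. Define g₊(φ) = −∫_{−π/2}^{π/2} ϱ(−cos(φ + θ)) cos(2θ − φ) dθ for φ ∈ (0, π/2). Then for 0 < φ < π/6, g₊(φ) < 0. -/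
open Real intervalIntegral

theorem stmt_16 (ϱ : ℝ → ℝ)
    (hϱ : ContDiff ℝ 1 ϱ)
    (hneg : ∀ z ∈ Set.Icc (-1:ℝ) 1, deriv ϱ z < 0)
    (hmono : MonotoneOn (deriv ϱ) (Set.Icc (-1) 1))
    (φ : ℝ) (hφ : 0 < φ) (hφ' : φ < π / 6) :
    -(∫ θ in (-(π/2))..(π/2),
        ϱ (-Real.cos (φ + θ)) * Real.cos (2 * θ - φ)) < 0 := by
  have hπ := Real.pi_pos
  have hcont : Continuous ϱ := hϱ.continuous
  have SA : StrictAntiOn ϱ (Set.Icc (-1:ℝ) 1) := by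
    apply strictAntiOn_of_deriv_neg (convex_Icc _ _) hcont.continuousOn
    intro x hx
    rw [interior_Icc] at hx
    exact hneg x (Set.mem_Icc_of_Ioo hx)
  have AA : AntitoneOn ϱ (Set.Icc (-1:ℝ) 1) := SA.antitoneOn
  have hmem : ∀ t : ℝ, -Real.cos t ∈ Set.Icc (-1:ℝ) 1 := fun t =>
    Set.mem_Icc.mpr ⟨neg_le_neg (Real.cos_le_one t), by
      have := Real.neg_one_le_cos t; linarith⟩
  set F : ℝ → ℝ := fun θ => ϱ (-Real.cos (φ + θ)) * Real.cos (2 * θ - φ) with hF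
  have hFc : Continuous F := by
    apply Continuous.mul
    · exact hcont.comp ((Real.continuous_cos.comp (continuous_const.add continuous_id)).neg)
    · exact Real.continuous_cos.comp ((continuous_const.mul continuous_id).sub continuous_const)
  have hint : ∀ a b : ℝ, IntervalIntegrable F MeasureTheory.volume a b :=
    fun a b => hFc.intervalIntegrable a b
  rw [neg_lt_zero]
  -- reflections
  have e1 : (∫ x in (φ/2 - π/4)..φ, F (φ - π/2 - x)) = ∫ x in (-(π/2))..(φ/2 - π/4), F x := by
    rw [intervalIntegral.integral_comp_sub_left F (φ - π/2)]
    congr 1 <;> ring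
  have e2 : (∫ x in φ..(φ/2 + π/4), F (φ + π/2 - x)) = ∫ x in (φ/2 + π/4)..(π/2), F x := by
    rw [intervalIntegral.integral_comp_sub_left F (φ + π/2)]
    congr 1 <;> ring
  have split : (∫ θ in (-(π/2))..(π/2), F θ)
      = (∫ x in (φ/2 - π/4)..φ, (F x + F (φ - π/2 - x)))
        + ∫ x in φ..(φ/2 + π/4), (F x + F (φ + π/2 - x)) := by
    have i1 : IntervalIntegrable (fun x => F (φ - π/2 - x)) MeasureTheory.volume (φ/2 - π/4) φ :=
      (hFc.comp (continuous_const.sub continuous_id)).intervalIntegrable _ _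
    have i2 : IntervalIntegrable (fun x => F (φ + π/2 - x)) MeasureTheory.volume φ (φ/2 + π/4) :=
      (hFc.comp (continuous_const.sub continuous_id)).intervalIntegrable _ _
    rw [intervalIntegral.integral_add (hint _ _) i1,
      intervalIntegral.integral_add (hint _ _) i2, e1, e2]
    have a1 := intervalIntegral.integral_add_adjacent_intervals
      (hint (-(π/2)) (φ/2 - π/4)) (hint (φ/2 - π/4) φ)
    have a2 := intervalIntegral.integral_add_adjacent_intervals
      (hint (-(π/2)) φ) (hint φ (φ/2 + π/4))
    have a3 := intervalIntegral.integral_add_adjacent_intervals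
      (hint (-(π/2)) (φ/2 + π/4)) (hint (φ/2 + π/4) (π/2))
    linarith
  show 0 < ∫ θ in (-(π/2))..(π/2), F θ
  rw [split]
  have pos1 : 0 < ∫ x in (φ/2 - π/4)..φ, (F x + F (φ - π/2 - x)) := by
    apply intervalIntegral.intervalIntegral_pos_of_pos_on
    · exact (hint _ _).add ((hFc.comp (continuous_const.sub continuous_id)).intervalIntegrable _ _)
    · intro x hx
      obtain ⟨hx1, hx2⟩ := hx
      have hc1 : Real.cos (2 * (φ - π/2 - x) - φ) = -Real.cos (2 * x - φ) := by
        rw [show 2 * (φ - π/2 - x) - φ = -((2*x - φ) + π) by ring, Real.cos_neg,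
          Real.cos_add_pi]
      have key : Real.cos (φ + (φ - π/2 - x)) < Real.cos (φ + x) := by
        rw [show φ + (φ - π/2 - x) = -(π/2 - 2*φ + x) by ring, Real.cos_neg,
          ← Real.cos_abs (φ + x)]
        apply Real.cos_lt_cos_of_nonneg_of_le_pi (abs_nonneg _)
        · linarith
        · rw [abs_lt]; constructor <;> linarith
      have hρ : ϱ (-Real.cos (φ + (φ - π/2 - x))) < ϱ (-Real.cos (φ + x)) :=
        SA (hmem _) (hmem _) (neg_lt_neg key)
      have hcpos : 0 < Real.cos (2 * x - φ) := by
        apply Real.cos_pos_of_mem_Ioo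
        rw [Set.mem_Ioo]
        constructor <;> linarith
      simp only [hF, hc1]
      nlinarith [mul_pos (sub_pos.mpr hρ) hcpos]
    · linarith
  have nonneg2 : 0 ≤ ∫ x in φ..(φ/2 + π/4), (F x + F (φ + π/2 - x)) := by
    apply intervalIntegral.integral_nonneg (by linarith)
    intro x hx
    obtain ⟨hx1, hx2⟩ := hx
    have hc1 : Real.cos (2 * (φ + π/2 - x) - φ) = -Real.cos (2 * x - φ) := by
      rw [show 2 * (φ + π/2 - x) - φ = ((φ - 2*x) + π) by ring, Real.cos_add_pi,
        show φ - 2*x = -(2*x - φ) by ring, Real.cos_neg]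
    have key : Real.cos (φ + (φ + π/2 - x)) ≤ Real.cos (φ + x) := by
      rw [show φ + (φ + π/2 - x) = 2*φ + π/2 - x by ring]
      apply Real.cos_le_cos_of_nonneg_of_le_pi (by linarith) (by linarith) (by linarith)
    have hρ : ϱ (-Real.cos (φ + (φ + π/2 - x))) ≤ ϱ (-Real.cos (φ + x)) :=
      AA (hmem _) (hmem _) (neg_le_neg key)
    have hcnn : 0 ≤ Real.cos (2 * x - φ) := by
      apply Real.cos_nonneg_of_mem_Icc
      rw [Set.mem_Icc]
      constructor <;> linarith
    simp only [hF, hc1]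
    nlinarith [mul_nonneg (sub_nonneg.mpr hρ) hcnn]
  linarith
end
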